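/- arXiv:2202.11776 — 8 statements merged into one kernel-verified Lean document; each statement's English description precedes it below -/
import Mathlib

section
/- Let W > 0, q ∈ (0,1), v₀ > W be fixed, and for z ∈ [0,1) define S(z) = (v₀ - W)/(1-q) - zW/(1-z) and T(z) = 1/(1-q) + z/(1-z) if S(z) ≥ 0, with T(z) = 0 and S(z) = 0 (non-participation) if S(z) < 0. Then the value z_T = 1 - W/((v₀-W)/(1-q) + W) maximizes T over [0,1), and at z = z_T the utility satisfies S(z_T) = 0. -/
/-!
Both quantities depend on `z` only through the odds `z / (1 - z)`: with `A = (v₀ - W) / (1 - q)`,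
utility is `A - W · odds` and engagement is `1 / (1 - q) + odds`. Participation thus caps the odds
at `A / W`, engagement grows with the odds, and `z_T = A / (A + W)` is exactly the point whose odds
equal `A / W`, where utility vanishes.
-/

open Set

lemma one_sub_div_add_eq_div_add {A W : ℝ} (h : A + W ≠ 0) : 1 - W / (A + W) = A / (A + W) := by
  field_simp
  ring

lemma div_add_mem_Ico {A W : ℝ} (hA : 0 ≤ A) (hW : 0 < W) : A / (A + W) ∈ Ico (0 : ℝ) 1 :=
  ⟨by positivity, (div_lt_one (by positivity)).2 (by linarith)⟩

lemma div_add_div_one_sub_div_add {A W : ℝ} (hAW : A + W ≠ 0) :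
    A / (A + W) / (1 - A / (A + W)) = A / W := by
  rw [← one_sub_div_add_eq_div_add hAW, sub_sub_cancel, one_sub_div_add_eq_div_add hAW,
    div_div_div_cancel_right₀ hAW]

lemma sub_mul_div_one_sub_nonneg_iff {A W z : ℝ} (hW : 0 < W) :
    0 ≤ A - z * W / (1 - z) ↔ z / (1 - z) ≤ A / W := by
  rw [sub_nonneg, mul_div_right_comm, le_div_iff₀ hW]

theorem stmt_0 (W q v₀ : ℝ) (hW : 0 < W) (hq : q ∈ Ioo (0:ℝ) 1) (hv : W < v₀)
    (S T : ℝ → ℝ)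
    (hS : ∀ z, S z = if 0 ≤ (v₀ - W) / (1 - q) - z * W / (1 - z)
      then (v₀ - W) / (1 - q) - z * W / (1 - z) else 0)
    (hT : ∀ z, T z = if 0 ≤ (v₀ - W) / (1 - q) - z * W / (1 - z)
      then 1 / (1 - q) + z / (1 - z) else 0)
    (zT : ℝ) (hzT : zT = 1 - W / ((v₀ - W) / (1 - q) + W)) :
    zT ∈ Ico (0:ℝ) 1 ∧ (∀ z ∈ Ico (0:ℝ) 1, T z ≤ T zT) ∧ S zT = 0 := by
  set A := (v₀ - W) / (1 - q)
  have h1q : 0 < 1 - q := sub_pos.2 hq.2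
  have hA : 0 ≤ A := div_nonneg (by linarith) h1q.le
  have hAW : A + W ≠ 0 := by positivity
  rw [one_sub_div_add_eq_div_add hAW] at hzT
  subst hzT
  have hodds := div_add_div_one_sub_div_add hAW
  have hzero : A - A / (A + W) * W / (1 - A / (A + W)) = 0 := by
    rw [mul_div_right_comm, hodds, div_mul_cancel₀ A hW.ne', sub_self]
  have hTzT : T (A / (A + W)) = 1 / (1 - q) + A / W := by
    rw [hT, if_pos hzero.ge, hodds]
  refine ⟨div_add_mem_Ico hA hW, fun z _ => ?_, by rw [hS, if_pos hzero.ge, hzero]⟩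
  rw [hT, hTzT]
  split_ifs with hpart
  · linarith [(sub_mul_div_one_sub_nonneg_iff hW).1 hpart]
  · positivity
end

section
/- Fix W > 0, q ∈ (0,1), v₀ > W, α > 0. For z ∈ [0,1) let v(z) = v₀ + αz, S(z) = (v(z) - W)/(1-q) - zW/(1-z) when this is nonnegative (else the user does not participate and S = T = 0), and T(z) = 1/(1-q) + z/(1-z) when S(z) ≥ 0. Then the utility-maximizing z is z_S = max(0, 1 - sqrt(W(1-q)/α)), and the engagement-maximizing z is z_T = ((α - v₀ + Wq) + sqrt((α - v₀ + Wq)² - 4α(W - v₀)))/(2α), which satisfies S(z_T) = 0 and z_T ≥ z_S. -/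
/-!
With `u = 1 - z`, the surplus is a constant minus `α u / (1 - q) + W / u`, which by AM-GM is
minimised over `u ∈ (0, 1]` at `u = min (√(W (1 - q) / α)) 1`; this gives `z_S`. Clearing the
denominator `(1 - q)(1 - z)`, the surplus is nonnegative exactly where the quadratic
`α z² - (α - v₀ + W q) z + (W - v₀)` is nonpositive, so participation means `z` is at most its
upper root `z_T`, where the surplus vanishes; the engagement `1 / (1 - q) + z / (1 - z)` is
increasing in `z`, hence maximal at `z_T`.
-/

open Set

section Quadratic

variable {a b c s : ℝ}

theorem quadratic_eq_zero_of_upper_root (ha : a ≠ 0) (hs : s ^ 2 = b ^ 2 - 4 * a * c) :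
    a * ((b + s) / (2 * a)) ^ 2 - b * ((b + s) / (2 * a)) + c = 0 := by
  field_simp
  linear_combination hs

theorem le_upper_root_of_quadratic_nonpos (ha : 0 < a) (hs : s ^ 2 = b ^ 2 - 4 * a * c)
    (hs₀ : 0 ≤ s) {x : ℝ} (hx : a * x ^ 2 - b * x + c ≤ 0) : x ≤ (b + s) / (2 * a) := by
  have hsq : (2 * a * x - b) ^ 2 ≤ s ^ 2 := by nlinarith
  rw [le_div_iff₀ (by positivity)]
  linarith [abs_le_of_sq_le_sq' hsq hs₀]

theorem upper_root_lt_of_quadratic_pos (ha : 0 < a) (hs : s ^ 2 = b ^ 2 - 4 * a * c)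
    {x : ℝ} (hbx : b ≤ 2 * a * x) (hx : 0 < a * x ^ 2 - b * x + c) :
    (b + s) / (2 * a) < x := by
  have hsq : s ^ 2 < (2 * a * x - b) ^ 2 := by nlinarith
  rw [div_lt_iff₀ (by positivity)]
  linarith [lt_of_pow_lt_pow_left₀ 2 (by linarith) hsq]

end Quadratic

theorem mul_add_div_min_sqrt_le {a b u : ℝ} (ha : 0 < a) (hb : 0 < b) (hu : u ∈ Ioc (0 : ℝ) 1) :
    a * min (Real.sqrt (b / a)) 1 + b / min (Real.sqrt (b / a)) 1 ≤ a * u + b / u := by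
  obtain ⟨hu₀, hu₁⟩ := hu
  set r := Real.sqrt (b / a)
  have hr₀ : 0 < r := Real.sqrt_pos.mpr (div_pos hb ha)
  have hr : a * r ^ 2 = b := by
    rw [Real.sq_sqrt (div_pos hb ha).le]; field_simp
  rcases le_total r 1 with h | h
  · rw [min_eq_left h]
    have gap : a * u + b / u - (a * r + b / r) = a * (u - r) ^ 2 / u := by
      rw [← hr]; field_simp; ring
    have : 0 ≤ a * (u - r) ^ 2 / u := by positivity
    linarith
  · rw [min_eq_right h, div_one]
    have hbu : a * u ≤ b := by
      nlinarith [mul_le_mul_of_nonneg_left hu₁ ha.le, one_le_pow₀ (n := 2) h]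
    have gap : a * u + b / u - (a * 1 + b) = (1 - u) * (b - a * u) / u := by
      field_simp; ring
    have : 0 ≤ (1 - u) * (b - a * u) / u :=
      div_nonneg (mul_nonneg (by linarith) (by linarith)) hu₀.le
    linarith

theorem max_zero_one_sub_sqrt_lt_one {x : ℝ} (hx : 0 < x) : max 0 (1 - Real.sqrt x) < 1 :=
  max_lt one_pos (sub_lt_self 1 (Real.sqrt_pos.mpr hx))

noncomputable def surplus (W q v₀ α z : ℝ) : ℝ := (v₀ + α * z - W) / (1 - q) - z * W / (1 - z)

section Surplus

variable {W q v₀ α z : ℝ}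

theorem surplus_zero : surplus W q v₀ α 0 = (v₀ - W) / (1 - q) := by
  simp [surplus]

theorem surplus_eq_neg_div (hq : q < 1) (hz : z < 1) :
    surplus W q v₀ α z =
      -(α * z ^ 2 - (α - v₀ + W * q) * z + (W - v₀)) / ((1 - q) * (1 - z)) := by
  have : 1 - q ≠ 0 := by linarith
  have : 1 - z ≠ 0 := by linarith
  unfold surplus
  field_simp
  ring

theorem surplus_nonneg_iff (hq : q < 1) (hz : z < 1) :
    0 ≤ surplus W q v₀ α z ↔ α * z ^ 2 - (α - v₀ + W * q) * z + (W - v₀) ≤ 0 := by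
  rw [surplus_eq_neg_div hq hz, le_div_iff₀ (mul_pos (by linarith) (by linarith)), zero_mul,
    neg_nonneg]

theorem surplus_eq_sub (hq : q < 1) (hz : z < 1) :
    surplus W q v₀ α z =
      (v₀ - W + α) / (1 - q) + W - (α / (1 - q) * (1 - z) + W / (1 - z)) := by
  have : 1 - q ≠ 0 := by linarith
  have : 1 - z ≠ 0 := by linarith
  unfold surplus
  field_simp
  ring

theorem surplus_le_surplus_max (hW : 0 < W) (hq : q < 1) (hα : 0 < α)
    (hz : z ∈ Ico (0 : ℝ) 1) :
    surplus W q v₀ α z ≤ surplus W q v₀ α (max 0 (1 - Real.sqrt (W * (1 - q) / α))) := by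
  have hzS : 1 - max 0 (1 - Real.sqrt (W * (1 - q) / α)) =
      min (Real.sqrt (W / (α / (1 - q)))) 1 := by
    rw [div_div_eq_mul_div]
    rcases le_total (Real.sqrt (W * (1 - q) / α)) 1 with h | h
    · rw [max_eq_right (by linarith), min_eq_left h]; ring
    · rw [max_eq_left (by linarith), min_eq_right h]; ring
  have hzS_lt := max_zero_one_sub_sqrt_lt_one (div_pos (mul_pos hW (sub_pos.mpr hq)) hα)
  rw [surplus_eq_sub hq hz.2, surplus_eq_sub hq hzS_lt, hzS, sub_le_sub_iff_left]
  exact mul_add_div_min_sqrt_le (div_pos hα (by linarith)) hW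
    ⟨by linarith [hz.2], by linarith [hz.1]⟩

end Surplus

theorem stmt_1 (W q v₀ α : ℝ) (hW : 0 < W) (hq : q ∈ Ioo (0:ℝ) 1) (hv : W < v₀)
    (hα : 0 < α)
    (S T : ℝ → ℝ)
    (hS : ∀ z, S z = if 0 ≤ (v₀ + α * z - W) / (1 - q) - z * W / (1 - z)
      then (v₀ + α * z - W) / (1 - q) - z * W / (1 - z) else 0)
    (hT : ∀ z, T z = if 0 ≤ (v₀ + α * z - W) / (1 - q) - z * W / (1 - z)
      then 1 / (1 - q) + z / (1 - z) else 0)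
    (zS zT : ℝ)
    (hzS : zS = max 0 (1 - Real.sqrt (W * (1 - q) / α)))
    (hzT : zT = ((α - v₀ + W * q) +
      Real.sqrt ((α - v₀ + W * q) ^ 2 - 4 * α * (W - v₀))) / (2 * α)) :
    (∀ z ∈ Ico (0:ℝ) 1, S z ≤ S zS) ∧
    (∀ z ∈ Ico (0:ℝ) 1, T z ≤ T zT) ∧
    S zT = 0 ∧ zS ≤ zT := by
  obtain ⟨-, hq⟩ := hq
  change ∀ z, S z = if 0 ≤ surplus W q v₀ α z then surplus W q v₀ α z else 0 at hS
  change ∀ z, T z = if 0 ≤ surplus W q v₀ α z then 1 / (1 - q) + z / (1 - z) else 0 at hT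
  have hdisc := Real.sq_sqrt (show 0 ≤ (α - v₀ + W * q) ^ 2 - 4 * α * (W - v₀) by nlinarith)
  have hzS_lt : zS < 1 :=
    hzS ▸ max_zero_one_sub_sqrt_lt_one (div_pos (mul_pos hW (sub_pos.mpr hq)) hα)
  have hmax : ∀ z ∈ Ico (0 : ℝ) 1, surplus W q v₀ α z ≤ surplus W q v₀ α zS :=
    fun z hz => hzS ▸ surplus_le_surplus_max hW hq hα hz
  have hpos : 0 < surplus W q v₀ α zS := by
    have h₀ := hmax 0 ⟨le_rfl, one_pos⟩
    rw [surplus_zero] at h₀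
    exact (div_pos (sub_pos.mpr hv) (sub_pos.mpr hq)).trans_le h₀
  have hzT_lt : zT < 1 := by
    rw [hzT]
    refine upper_root_lt_of_quadratic_pos hα hdisc ?_ ?_ <;> nlinarith
  have hroot : surplus W q v₀ α zT = 0 := by
    rw [surplus_eq_neg_div hq hzT_lt, hzT, quadratic_eq_zero_of_upper_root hα.ne' hdisc, neg_zero,
      zero_div]
  have hle : ∀ z < 1, 0 ≤ surplus W q v₀ α z → z ≤ zT := fun z hz h =>
    hzT ▸ le_upper_root_of_quadratic_nonpos hα hdisc (Real.sqrt_nonneg _)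
      ((surplus_nonneg_iff hq hz).mp h)
  have hzS_le : zS ≤ zT := hle zS hzS_lt hpos.le
  have hzS_nonneg : 0 ≤ zS := hzS ▸ le_max_left _ _
  refine ⟨fun z hz => ?_, fun z hz => ?_, by rw [hS, if_pos hroot.ge, hroot], hzS_le⟩
  · rw [hS, hS, if_pos hpos.le]
    split_ifs
    exacts [hmax z hz, hpos.le]
  · rw [hT, hT, if_pos hroot.ge]
    have hzT_nonneg : 0 ≤ zT := hzS_nonneg.trans hzS_le
    split_ifs with h
    · have := hle z hz.2 h
      gcongr
    · exact add_nonneg (one_div_pos.mpr (sub_pos.mpr hq)).le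
        (div_nonneg hzT_nonneg (sub_pos.mpr hzT_lt).le)
end

section
/- Let W > 0, α ∈ [0,1), β ≥ 0, v₀ > 0. Suppose a set M ⊆ [0,1) × [0,1) × ℝ₊ satisfies: p ≤ α and |v̄ - v₀| < β for all (p,q,v̄) ∈ M. Define g_S(p,q,v̄) = (v̄ - W)/(1-q) - pW/(1-p) and g_T(p,q,v̄) = 1/(1-q) + p/(1-p). If ω_S ∈ M maximizes g_S over M and ω_T ∈ M maximizes g_T over {ω ∈ M : g_S(ω) ≥ 0}, with g_S(ω_S) ≥ 0, then g_S(ω_T) ≥ g_S(ω_S) - 2β·g_T(ω_S) - α(v₀+β)/(1-α). -/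
open Set

theorem stmt_3 (W α β v₀ : ℝ) (hW : 0 < W) (hα : α ∈ Ico (0:ℝ) 1)
    (hβ : 0 ≤ β) (hv₀ : 0 < v₀)
    (M : Set (ℝ × ℝ × ℝ))
    (hM : M ⊆ (Ico (0:ℝ) 1) ×ˢ ((Ico (0:ℝ) 1) ×ˢ (Ioi (0:ℝ))))
    (hp : ∀ ω ∈ M, ω.1 ≤ α)
    (hv : ∀ ω ∈ M, |ω.2.2 - v₀| < β)
    (gS gT : ℝ × ℝ × ℝ → ℝ)
    (hgS : ∀ ω, gS ω = (ω.2.2 - W) / (1 - ω.2.1) - ω.1 * W / (1 - ω.1))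
    (hgT : ∀ ω, gT ω = 1 / (1 - ω.2.1) + ω.1 / (1 - ω.1))
    (ωS ωT : ℝ × ℝ × ℝ) (hωS : ωS ∈ M) (hωT : ωT ∈ M)
    (hmaxS : ∀ ω ∈ M, gS ω ≤ gS ωS)
    (hωT0 : 0 ≤ gS ωT)
    (hmaxT : ∀ ω ∈ M, 0 ≤ gS ω → gT ω ≤ gT ωT)
    (hωS0 : 0 ≤ gS ωS) :
    gS ωT ≥ gS ωS - 2 * β * gT ωS - α * (v₀ + β) / (1 - α) := by
  obtain ⟨hα0, hα1⟩ := hα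
  have hα1' : 0 < 1 - α := by linarith
  have hmemS := hM hωS
  have hmemT := hM hωT
  simp only [Set.mem_prod, Set.mem_Ico, Set.mem_Ioi] at hmemS hmemT
  obtain ⟨⟨hp1S, hp2S⟩, ⟨hq1S, hq2S⟩, hvS⟩ := hmemS
  obtain ⟨⟨hp1T, hp2T⟩, ⟨hq1T, hq2T⟩, hvT⟩ := hmemT
  have hpS' : 0 < 1 - ωS.1 := by linarith
  have hqS' : 0 < 1 - ωS.2.1 := by linarith
  have hpT' : 0 < 1 - ωT.1 := by linarith
  have hqT' : 0 < 1 - ωT.2.1 := by linarith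
  have hvS' := abs_lt.mp (hv ωS hωS)
  have hvT' := abs_lt.mp (hv ωT hωT)
  -- key identity
  have idS : gS ωS = ωS.2.2 / (1 - ωS.2.1) - W * gT ωS := by
    rw [hgS, hgT]; field_simp; ring
  have idT : gS ωT = ωT.2.2 / (1 - ωT.2.1) - W * gT ωT := by
    rw [hgS, hgT]; field_simp; ring
  -- gT bounds
  have hgTS_ge : 1 / (1 - ωS.2.1) ≤ gT ωS := by
    rw [hgT]
    have : 0 ≤ ωS.1 / (1 - ωS.1) := div_nonneg hp1S hpS'.le
    linarith
  have hgTS_pos : 0 < gT ωS := by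
    have : 0 < 1 / (1 - ωS.2.1) := by positivity
    linarith
  have hgTT_ge : gT ωS ≤ gT ωT := hmaxT ωS hωS hωS0
  -- upper bound for gS ωS
  have UB : gS ωS ≤ (v₀ + β) * gT ωS - W * gT ωS := by
    rw [idS]
    have h1 : ωS.2.2 / (1 - ωS.2.1) ≤ (v₀ + β) / (1 - ωS.2.1) := by
      gcongr; linarith [hvS'.2]
    have h2 : (v₀ + β) / (1 - ωS.2.1) ≤ (v₀ + β) * gT ωS := by
      have hvβ : 0 ≤ v₀ + β := by linarith
      calc (v₀ + β) / (1 - ωS.2.1) = (v₀ + β) * (1 / (1 - ωS.2.1)) := by ring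
        _ ≤ (v₀ + β) * gT ωS := by
            exact mul_le_mul_of_nonneg_left hgTS_ge hvβ
    linarith
  have hαterm : 0 ≤ α * (v₀ + β) / (1 - α) := by positivity
  rcases le_or_gt (v₀ - β - W) 0 with hcase | hcase
  · -- RHS ≤ 0 ≤ gS ωT
    have h1 : gS ωS - 2 * β * gT ωS ≤ (v₀ - β - W) * gT ωS := by nlinarith
    have h2 : (v₀ - β - W) * gT ωS ≤ 0 := mul_nonpos_of_nonpos_of_nonneg hcase hgTS_pos.le
    linarith
  · -- main case
    have hvβ0 : 0 < v₀ - β := by linarith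
    -- lower bound on gS ωT
    have hfrac : ωT.1 / (1 - ωT.1) ≤ α / (1 - α) := by
      rw [div_le_div_iff₀ hpT' hα1']
      have := hp ωT hωT
      nlinarith
    have LB : gS ωT ≥ (v₀ - β - W) * gT ωT - (v₀ - β) * (ωT.1 / (1 - ωT.1)) := by
      rw [idT]
      have h1 : (v₀ - β) / (1 - ωT.2.1) ≤ ωT.2.2 / (1 - ωT.2.1) := by
        gcongr; linarith [hvT'.1]
      have h2 : 1 / (1 - ωT.2.1) = gT ωT - ωT.1 / (1 - ωT.1) := by
        rw [hgT]; ring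
      have h3 : (v₀ - β) / (1 - ωT.2.1) = (v₀ - β) * (gT ωT - ωT.1 / (1 - ωT.1)) := by
        rw [← h2]; ring
      have expand : (v₀ - β - W) * gT ωT - (v₀ - β) * (ωT.1 / (1 - ωT.1))
          = (v₀ - β) / (1 - ωT.2.1) - W * gT ωT := by rw [h3]; ring
      rw [ge_iff_le, expand]
      linarith
    have h4 : (v₀ - β) * (ωT.1 / (1 - ωT.1)) ≤ (v₀ + β) * (α / (1 - α)) := by
      have := mul_le_mul_of_nonneg_left hfrac hvβ0.le
      have h5 : (v₀ - β) * (α / (1 - α)) ≤ (v₀ + β) * (α / (1 - α)) := by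
        have hA : 0 ≤ α / (1 - α) := by positivity
        exact mul_le_mul_of_nonneg_right (by linarith) hA
      linarith
    have h6 : (v₀ - β - W) * gT ωS ≤ (v₀ - β - W) * gT ωT :=
      mul_le_mul_of_nonneg_left hgTT_ge hcase.le
    have h7 : gS ωS - 2 * β * gT ωS ≤ (v₀ - β - W) * gT ωS := by linarith [UB]
    have h8 : α * (v₀ + β) / (1 - α) = (v₀ + β) * (α / (1 - α)) := by
      field_simp
    linarith
end

section
/- For all real x > 0, ((x+1)/x)·(1 - ln(x+1)/x) ≥ 1/2; and for all x ∈ (-1, 0), ((x+1)/x)·(1 - ln(x+1)/x) ≤ 1/2. -/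
/-!
With `t = x + 1`, the expression minus `1/2` equals `(x + 1) / x² * (sinh (log t) - log t)`,
since `sinh (log t) = (t - t⁻¹) / 2`. Its sign is therefore that of `log t`, i.e. that of `x`,
because `sinh y - y` has the sign of `y`.
-/

namespace Real

theorem log_le_half_sub_inv {t : ℝ} (ht : 1 ≤ t) : log t ≤ (t - t⁻¹) / 2 := by
  rw [← sinh_log (by linarith)]
  exact self_le_sinh_iff.2 (log_nonneg ht)

theorem half_sub_inv_le_log {t : ℝ} (h0 : 0 < t) (h1 : t ≤ 1) : (t - t⁻¹) / 2 ≤ log t := by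
  rw [← sinh_log h0]
  exact sinh_le_self_iff.2 (log_nonpos h0.le h1)

end Real

open Real

theorem sub_half_eq_mul_half_sub_inv_sub_log {x : ℝ} (hx : x ≠ 0) (hx1 : x + 1 ≠ 0) :
    (x + 1) / x * (1 - log (x + 1) / x) - 1 / 2 =
      (x + 1) / x ^ 2 * ((x + 1 - (x + 1)⁻¹) / 2 - log (x + 1)) := by
  field_simp
  ring

theorem stmt_7 :
    (∀ x : ℝ, 0 < x → (1/2 : ℝ) ≤ (x + 1) / x * (1 - Real.log (x + 1) / x)) ∧
    (∀ x : ℝ, -1 < x → x < 0 → (x + 1) / x * (1 - Real.log (x + 1) / x) ≤ 1/2) := by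
  constructor
  · intro x hx
    rw [← sub_nonneg, sub_half_eq_mul_half_sub_inv_sub_log hx.ne' (by linarith)]
    exact mul_nonneg (by positivity) (sub_nonneg.2 (log_le_half_sub_inv (by linarith)))
  · intro x hx1 hx
    rw [← sub_nonpos, sub_half_eq_mul_half_sub_inv_sub_log hx.ne (by linarith)]
    exact mul_nonpos_of_nonneg_of_nonpos (div_nonneg (by linarith) (sq_nonneg x))
      (sub_nonpos.2 (half_sub_inv_le_log (by linarith) (by linarith)))
end

section
/- Let p ∈ (0,1), q ∈ (0,1) with q > p, and v̄ ≥ 2W > 0. Define β = q/p > 1 and for integer t ≥ 1, h(t) = v̄·(t·β^t/(β^t - 1) - 1/(β-1)) - W·t. Then h is increasing in t (as a real function of t > 0). -/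
/-!
Write `u = β ^ t > 1`. The derivative of `t ↦ t β^t / (β^t - 1)` is
`u (u - 1 - log u) / (u - 1)^2`, which exceeds `1/2` because `log u < sinh (log u) = (u - u⁻¹) / 2`.
Hence `h' > v / 2 - W ≥ 0`.
-/

open Set Real

lemma Real.log_lt_sub_inv_div_two {u : ℝ} (hu : 1 < u) : log u < (u - u⁻¹) / 2 := by
  rw [← sinh_log (by linarith)]
  exact self_lt_sinh_iff.2 (log_pos hu)

lemma half_lt_mul_sub_one_sub_log_div_sq {u : ℝ} (hu : 1 < u) :
    1 / 2 < u * (u - 1 - log u) / (u - 1) ^ 2 := by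
  have hlog : 2 * u * log u < u ^ 2 - 1 := by
    have := log_lt_sub_inv_div_two hu
    have hu0 : 0 < u := by linarith
    calc 2 * u * log u < 2 * u * ((u - u⁻¹) / 2) := by gcongr
      _ = u ^ 2 - 1 := by field_simp
  rw [lt_div_iff₀ (by nlinarith)]
  nlinarith

lemma hasDerivAt_mul_rpow_div_rpow_sub_one {β t : ℝ} (hβ : 0 < β) (ht : β ^ t ≠ 1) :
    HasDerivAt (fun s => s * β ^ s / (β ^ s - 1))
      (β ^ t * (β ^ t - 1 - log (β ^ t)) / (β ^ t - 1) ^ 2) t := by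
  have hpow : HasDerivAt (fun s => β ^ s) (β ^ t * log β) t :=
    (hasStrictDerivAt_const_rpow hβ t).hasDerivAt
  refine (((hasDerivAt_id' t).fun_mul hpow).fun_div (hpow.sub_const 1)
    (sub_ne_zero.2 ht)).congr_deriv ?_
  rw [log_rpow hβ]
  ring

theorem stmt_10_general (p q W v : ℝ) (hp : p ∈ Ioo (0:ℝ) 1)
    (hqp : p < q) (hW : 0 < W) (hv : 2 * W ≤ v)
    (β : ℝ) (hβ : β = q / p)
    (h : ℝ → ℝ)
    (hh : ∀ t, h t = v * (t * β ^ t / (β ^ t - 1) - 1 / (β - 1)) - W * t) :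
    StrictMonoOn h (Ioi (0:ℝ)) := by
  have hβ1 : 1 < β := hβ ▸ (one_lt_div hp.1).2 hqp
  have hβ0 : 0 < β := by linarith
  set u : ℝ → ℝ := fun t => β ^ t
  set h' : ℝ → ℝ := fun t => v * (u t * (u t - 1 - log (u t)) / (u t - 1) ^ 2) - W * 1
  have hu1 : ∀ t ∈ Ioi (0:ℝ), 1 < u t := fun t ht => one_lt_rpow hβ1 ht
  have hderiv : ∀ t ∈ Ioi (0:ℝ), HasDerivAt h (h' t) t := fun t ht => by
    rw [show h = _ from funext hh]
    exact (((hasDerivAt_mul_rpow_div_rpow_sub_one hβ0 (hu1 t ht).ne').sub_const _).const_mul v).sub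
      ((hasDerivAt_id t).const_mul W)
  refine strictMonoOn_of_hasDerivWithinAt_pos (f' := h') (convex_Ioi 0)
    (fun t ht => (hderiv t ht).continuousAt.continuousWithinAt) (fun t ht => ?_) (fun t ht => ?_)
    <;> rw [interior_Ioi] at ht
  · exact (hderiv t ht).hasDerivWithinAt
  have hhalf := half_lt_mul_sub_one_sub_log_div_sq (hu1 t ht)
  have := mul_lt_mul_of_pos_left hhalf (by linarith : 0 < v)
  simp only [h']
  linarith

theorem stmt_10 (p q W v : ℝ) (hp : p ∈ Ioo (0:ℝ) 1) (hq : q ∈ Ioo (0:ℝ) 1)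
    (hqp : p < q) (hW : 0 < W) (hv : 2 * W ≤ v)
    (β : ℝ) (hβ : β = q / p)
    (h : ℝ → ℝ)
    (hh : ∀ t, h t = v * (t * β ^ t / (β ^ t - 1) - 1 / (β - 1)) - W * t) :
    StrictMonoOn h (Ioi (0:ℝ)) :=
  stmt_10_general p q W v hp hqp hW hv β hβ h hh
end

section
/- Let γ ∈ (0,1), p ∈ [0,1), W > 0, v̄ > 0. An agent at time t with system 2 active continues if and only if v̄·γ^t/W ≥ (1 - pγ)/(1 - p). The right-hand side (1-pγ)/(1-p) = (1-γ)/(1-p) + γ is strictly increasing in p, so as p increases the agent's decision at a fixed time t can only change from continuing to leaving. -/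
open Set

theorem stmt_12 (γ W v : ℝ) (hγ : γ ∈ Ioo (0:ℝ) 1) (hW : 0 < W) (hv : 0 < v) :
    (∀ p ∈ Ico (0:ℝ) 1, (1 - p * γ) / (1 - p) = (1 - γ) / (1 - p) + γ) ∧
    StrictMonoOn (fun p : ℝ => (1 - p * γ) / (1 - p)) (Ico (0:ℝ) 1) ∧
    (∀ t : ℕ, ∀ p₁ ∈ Ico (0:ℝ) 1, ∀ p₂ ∈ Ico (0:ℝ) 1, p₁ ≤ p₂ →
      (1 - p₂ * γ) / (1 - p₂) ≤ v * γ ^ t / W →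
      (1 - p₁ * γ) / (1 - p₁) ≤ v * γ ^ t / W) := by
  obtain ⟨hγ0, hγ1⟩ := hγ
  have key : ∀ p ∈ Ico (0:ℝ) 1, (1 - p * γ) / (1 - p) = (1 - γ) / (1 - p) + γ := by
    intro p hp
    have h1 : (1 : ℝ) - p ≠ 0 := by linarith [hp.2]
    field_simp
    ring
  have mono : StrictMonoOn (fun p : ℝ => (1 - p * γ) / (1 - p)) (Ico (0:ℝ) 1) := by
    intro a ha b hb hab
    show (1 - a * γ) / (1 - a) < (1 - b * γ) / (1 - b)
    rw [key a ha, key b hb]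
    have h1a : (0:ℝ) < 1 - a := by linarith [ha.2]
    have h1b : (0:ℝ) < 1 - b := by linarith [hb.2]
    have : (1 - γ) / (1 - a) < (1 - γ) / (1 - b) := by
      apply div_lt_div_of_pos_left (by linarith) h1b (by linarith)
    simpa using this
  refine ⟨key, mono, ?_⟩
  intro t p₁ hp₁ p₂ hp₂ hle h
  rcases eq_or_lt_of_le hle with rfl | hlt
  · exact h
  · exact le_trans (mono hp₁ hp₂ hlt).le h
end

section
/- Let γ ∈ (0,1) and p ∈ [0,1). The function f(p) = (log(W(1-pγ)/(v̄(1-p))))/log γ + 1/(1-p) is strictly increasing in p on [0,1), for any fixed W, v̄ > 0. -/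
/-!
Substituting `u = 1/(1-p)`, which increases from `1` to `∞`, turns the argument of the logarithm
into `(W/v) (γ + (1-γ) u)`, so up to a constant the function is `u + log (γ + (1-γ) u) / log γ`.
On `u ≥ 1` the logarithm is `1`-Lipschitz, hence the log term moves by at most
`(1-γ)/(-log γ) < 1` times the increment of `u`, by `log γ < γ - 1`.
-/

open Set Real

lemma Real.log_sub_log_le_sub {a b : ℝ} (ha : 1 ≤ a) (hab : a ≤ b) : log b - log a ≤ b - a := by
  have ha0 : 0 < a := by linarith
  have hb0 : 0 < b := by linarith
  calc log b - log a = log (b / a) := (log_div hb0.ne' ha0.ne').symm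
    _ ≤ b / a - 1 := log_le_sub_one_of_pos (by positivity)
    _ = (b - a) / a := by field_simp
    _ ≤ b - a := div_le_self (by linarith) ha

lemma strictMonoOn_add_log_affine_div_log {γ : ℝ} (hγ0 : 0 < γ) (hγ1 : γ < 1) :
    StrictMonoOn (fun u => u + log (γ + (1 - γ) * u) / log γ) (Ici 1) := by
  intro u (hu : 1 ≤ u) u' _ huu'
  have hlogγ : 1 - γ < -log γ := by linarith [log_lt_sub_one_of_pos hγ0 hγ1.ne]
  have hlog : log (γ + (1 - γ) * u') - log (γ + (1 - γ) * u) ≤ (1 - γ) * (u' - u) := by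
    have := log_sub_log_le_sub (a := γ + (1 - γ) * u) (b := γ + (1 - γ) * u')
      (by nlinarith) (by nlinarith)
    linarith
  have hdiff : u - u' < (log (γ + (1 - γ) * u') - log (γ + (1 - γ) * u)) / log γ := by
    rw [lt_div_iff_of_neg (by linarith)]
    nlinarith
  dsimp only
  rw [sub_div] at hdiff
  linarith

lemma strictMonoOn_one_div_one_sub : StrictMonoOn (fun p : ℝ => 1 / (1 - p)) (Iio 1) :=
  fun _ _ q (hq : q < 1) hpq => one_div_lt_one_div_of_lt (by linarith) (by linarith)

lemma log_mul_one_sub_mul_div {γ W v p : ℝ} (hW : 0 < W) (hv : 0 < v) (hγ0 : 0 < γ)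
    (hγ1 : γ < 1) (hp : p < 1) :
    log (W * (1 - p * γ) / (v * (1 - p))) = log (W / v) + log (γ + (1 - γ) * (1 / (1 - p))) := by
  have hp' : 0 < 1 - p := by linarith
  have hsplit : W * (1 - p * γ) / (v * (1 - p)) = W / v * (γ + (1 - γ) * (1 / (1 - p))) := by
    field_simp
    ring
  have hγ' : 0 < 1 - γ := by linarith
  rw [hsplit, log_mul (by positivity) (by positivity)]

theorem stmt_14 (γ W v : ℝ) (hγ : γ ∈ Ioo (0:ℝ) 1) (hW : 0 < W) (hv : 0 < v) :
    StrictMonoOn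
      (fun p : ℝ => Real.log (W * (1 - p * γ) / (v * (1 - p))) / Real.log γ + 1 / (1 - p))
      (Ico (0:ℝ) 1) := by
  obtain ⟨hγ0, hγ1⟩ := hγ
  have hmaps : MapsTo (fun p : ℝ => 1 / (1 - p)) (Ico 0 1) (Ici 1) := fun _ ⟨_, hp1⟩ =>
    (one_le_div (sub_pos.2 hp1)).2 (by linarith)
  refine (((strictMonoOn_add_log_affine_div_log hγ0 hγ1).comp
    (strictMonoOn_one_div_one_sub.mono Ico_subset_Iio_self) hmaps).const_add
      (log (W / v) / log γ)).congr fun p hp => ?_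
  simp only [Function.comp_apply, log_mul_one_sub_mul_div hW hv hγ0 hγ1 hp.2]
  ring
end

section
/- Let A, B : ℝ → ℝ with 0 ≤ B(τ) < 1 for all τ, define F(τ) = A(τ)/(1 - B(τ)) and M(γ) = sup_τ (A(τ) + B(τ)·γ). Suppose τ* maximizes F and let γ* = F(τ*). Then: (1) for all γ ∈ [0, γ*], M(γ) ≥ γ; (2) for all γ > γ*, M(γ) < γ; and (3) M(γ*) = γ*. -/
/-! Since `a + b γ - γ = (1 - b) (a / (1 - b) - γ)` with `1 - b > 0`, the affine map
`γ ↦ A τ + B τ γ` lies above the diagonal exactly for `γ ≤ F τ`. Taking the attained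
supremum over `τ`, `M` lies above the diagonal exactly for `γ ≤ max F = γ*`. -/

section AffineVsDiagonal

variable {a b γ : ℝ}

theorem self_le_add_mul_iff (hb : b < 1) : γ ≤ a + b * γ ↔ γ ≤ a / (1 - b) := by
  rw [le_div_iff₀ (sub_pos.2 hb)]
  constructor <;> intro h <;> linarith

theorem add_mul_le_self_iff (hb : b < 1) : a + b * γ ≤ γ ↔ a / (1 - b) ≤ γ := by
  rw [div_le_iff₀ (sub_pos.2 hb)]
  constructor <;> intro h <;> linarith

theorem add_mul_lt_self_iff (hb : b < 1) : a + b * γ < γ ↔ a / (1 - b) < γ := by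
  rw [div_lt_iff₀ (sub_pos.2 hb)]
  constructor <;> intro h <;> linarith

end AffineVsDiagonal

theorem stmt_17 (A B F M : ℝ → ℝ)
    (hB : ∀ τ, 0 ≤ B τ ∧ B τ < 1)
    (hF : ∀ τ, F τ = A τ / (1 - B τ))
    (τstar : ℝ) (hτstar : ∀ τ, F τ ≤ F τstar)
    (hM : ∀ γ, (∀ τ, A τ + B τ * γ ≤ M γ) ∧ ∃ τ, M γ = A τ + B τ * γ)
    (γstar : ℝ) (hγstar : γstar = F τstar) :
    (∀ γ ∈ Set.Icc 0 γstar, γ ≤ M γ) ∧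
    (∀ γ, γstar < γ → M γ < γ) ∧
    M γstar = γstar := by
  have hF_le : ∀ τ, A τ / (1 - B τ) ≤ γstar := fun τ => hF τ ▸ hγstar ▸ hτstar τ
  have le_M : ∀ γ, γ ≤ γstar → γ ≤ M γ := fun γ hγ =>
    ((self_le_add_mul_iff (hB τstar).2).2 (by rwa [← hF, ← hγstar])).trans ((hM γ).1 τstar)
  refine ⟨fun γ hγ => le_M γ hγ.2, fun γ hγ => ?_, le_antisymm ?_ (le_M γstar le_rfl)⟩
  · obtain ⟨τ, hτ⟩ := (hM γ).2
    rw [hτ]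
    exact (add_mul_lt_self_iff (hB τ).2).2 ((hF_le τ).trans_lt hγ)
  · obtain ⟨τ, hτ⟩ := (hM γstar).2
    rw [hτ]
    exact (add_mul_le_self_iff (hB τ).2).2 (hF_le τ)
end
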